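/- arXiv:2504.18188 — 2 statements merged into one kernel-verified Lean document; each statement's English description precedes it below -/
import Mathlib

section
/- Let π be a permutation of a finite set X and (x₁*, y₁*), ..., (x_k*, y_k*) a good tuple with respect to π. Then (π[x₁* → y₁*]...[x_{k-1}* → y_{k-1}*])⁻¹(y_k*) = π⁻¹(y_k*). -/
open Equiv Finset
open scoped Classical

variable {X : Type*} [DecidableEq X] [Fintype X]

/-- Pointwise definition of the reprogrammed function `π[x → y]`. -/
def reprogFun (π : Equiv.Perm X) (x y : X) (z : X) : X :=
  if z = x then y else if z = π.symm y then π x else π z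

/-- Reprogramming of a permutation: `π[x → y] = π ∘ (x  π⁻¹(y))`. -/
def reprog (π : Equiv.Perm X) (x y : X) : Equiv.Perm X :=
  π * Equiv.swap x (π.symm y)

/-- Iterated reprogramming over a list of pairs, applied left to right. -/
def reprogList (π : Equiv.Perm X) (ps : List (X × X)) : Equiv.Perm X :=
  ps.foldl (fun σ p => reprog σ p.1 p.2) π

/-- Iterated reprogramming `π[x₁ → y₁]...[x_k → y_k]` over vectors of pairs. -/
def reprogVec {k : ℕ} (π : Equiv.Perm X) (x y : Fin k → X) : Equiv.Perm X :=
  (List.finRange k).foldl (fun σ i => reprog σ (x i) (y i)) π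

/-- A tuple of pairs `(x i, y i)` is good w.r.t. `π`. -/
def IsGood {k : ℕ} (π : Equiv.Perm X) (x y : Fin k → X) : Prop :=
  Function.Injective x ∧ Function.Injective y ∧ ∀ i j, π (x i) ≠ y j

/-! A reprogramming `π[x → y]` changes `π` only at `x` and at `π⁻¹ y`, so a point `z` with
`z ≠ x` and `π z ≠ y` keeps its image; as the image is unchanged, the same condition carries over
to all later steps. For `z = π⁻¹ (y k)` goodness gives exactly these conditions for every `i < k`:
`π (x i) ≠ y k`, and `y i ≠ y k` by injectivity of `y`. -/

section

variable {α : Type*} [DecidableEq α]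

lemma reprog_apply_of_ne {π : Equiv.Perm α} {a b z : α} (ha : z ≠ a) (hb : π z ≠ b) :
    reprog π a b z = π z := by
  have hb' : z ≠ π.symm b := fun hz => hb (by simp [hz])
  simp [reprog, Equiv.swap_apply_of_ne_of_ne ha hb']

lemma foldl_reprog_apply_of_ne {ι : Type*} (x y : ι → α) {z : α} :
    ∀ (l : List ι) (π : Equiv.Perm α), (∀ i ∈ l, z ≠ x i) → (∀ i ∈ l, π z ≠ y i) →
      l.foldl (fun σ i => reprog σ (x i) (y i)) π z = π z
  | [], _, _, _ => rfl
  | i :: l, π, hx, hy => by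
    have hstep : reprog π (x i) (y i) z = π z :=
      reprog_apply_of_ne (hx i List.mem_cons_self) (hy i List.mem_cons_self)
    rw [List.foldl_cons, foldl_reprog_apply_of_ne x y l _
      (fun j hj => hx j (List.mem_cons_of_mem _ hj))
      (fun j hj => hstep ▸ hy j (List.mem_cons_of_mem _ hj)), hstep]

lemma reprogVec_symm_apply_of_ne {k : ℕ} {π : Equiv.Perm α} {x y : Fin k → α} {t : α}
    (hx : ∀ i, π (x i) ≠ t) (hy : ∀ i, y i ≠ t) :
    (reprogVec π x y).symm t = π.symm t := by
  have hfix : reprogVec π x y (π.symm t) = π (π.symm t) :=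
    foldl_reprog_apply_of_ne x y _ π
      (fun i _ hi => hx i (by rw [← hi, apply_symm_apply]))
      (fun i _ => by rw [apply_symm_apply]; exact (hy i).symm)
  rw [symm_apply_eq, hfix, apply_symm_apply]

end

/-- Reprogramming on the first `k` pairs of a good `(k+1)`-tuple does not change
the value of `π⁻¹` at the last output `y (Fin.last k)`. -/
theorem reprogVec_init_symm_apply_last {k : ℕ} (π : Equiv.Perm X)
    (x y : Fin (k + 1) → X) (h : IsGood π x y) :
    (reprogVec π (x ∘ Fin.castSucc) (y ∘ Fin.castSucc)).symm (y (Fin.last k))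
      = π.symm (y (Fin.last k)) := by
  obtain ⟨-, hy, hxy⟩ := h
  exact reprogVec_symm_apply_of_ne (fun i => hxy _ _)
    (fun i => hy.ne (Fin.castSucc_lt_last i).ne)
end

section
/- Let π be a permutation of a finite set X and (x₁*, y₁*), ..., (x_k*, y_k*) a good tuple with respect to π. Then π[x₁* → y₁*]...[x_k* → y_k*](π⁻¹(y_k*)) = π(x_k*). -/
open Equiv Finset
open scoped Classical

variable {X : Type*} [DecidableEq X] [Fintype X]

/-!
Reprogramming `σ[x → y]` sends `σ⁻¹ y` to `σ x`. By goodness, the first `k` reprogrammings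
change `π` only at the points `x i` and `π⁻¹ (y i)` with `i < k`, which differ from both `x_k` and
`π⁻¹ y_k`; so the permutation `σ` reprogrammed in the last step agrees with `π` at these two points,
and `σ⁻¹ y_k = π⁻¹ y_k`.
-/

omit [Fintype X] in
theorem reprog_apply_symm (σ : Perm X) (x y : X) : reprog σ x y (σ.symm y) = σ x := by
  rw [reprog, Perm.mul_apply, swap_apply_right]

omit [Fintype X] in
theorem reprog_apply_of_ne_s8 {σ : Perm X} {x y z : X} (hx : z ≠ x) (hy : z ≠ σ.symm y) :
    reprog σ x y z = σ z := by
  rw [reprog, Perm.mul_apply, swap_apply_of_ne_of_ne hx hy]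

omit [Fintype X] in
theorem reprogList_append_singleton (π : Perm X) (ps : List (X × X)) (q : X × X) :
    reprogList π (ps ++ [q]) = reprog (reprogList π ps) q.1 q.2 := by
  rw [reprogList, List.foldl_append]
  rfl

omit [Fintype X] in
/-- At each step `σ⁻¹ q.2` is still `π⁻¹ q.2`, so the transposition of that step fixes every
point no pair has touched. -/
theorem reprogList_apply_of_forall_ne {π : Perm X} {ps : List (X × X)}
    (hps : ps.Pairwise fun p q => π p.1 ≠ q.2 ∧ p.2 ≠ q.2) {z : X}
    (hz : ∀ p ∈ ps, z ≠ p.1 ∧ π z ≠ p.2) : reprogList π ps z = π z := by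
  induction ps using List.reverseRecOn generalizing z with
  | nil => rfl
  | append_singleton ps q ih =>
    obtain ⟨hps, -, hq⟩ := List.pairwise_append.mp hps
    simp only [List.mem_singleton, forall_eq] at hq
    obtain ⟨hzq₁, hzq₂⟩ := hz q (List.mem_append_right _ (List.mem_singleton_self q))
    have hσq : (reprogList π ps).symm q.2 = π.symm q.2 := by
      refine (Equiv.symm_apply_eq _).mpr ?_
      rw [ih hps fun p hp => ⟨?_, ?_⟩, apply_symm_apply]
      · exact fun h => (hq p hp).1 (by rw [← h, apply_symm_apply])
      · simpa using (hq p hp).2.symm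
    rw [reprogList_append_singleton, reprog_apply_of_ne_s8 hzq₁ (by rwa [hσq, Ne, eq_symm_apply]),
      ih hps fun p hp => hz p (List.mem_append_left _ hp)]

omit [Fintype X] in
theorem reprogVec_eq_reprogList {k : ℕ} (π : Perm X) (x y : Fin k → X) :
    reprogVec π x y = reprogList π (List.ofFn fun i => (x i, y i)) := by
  rw [reprogVec, reprogList, List.ofFn_eq_map, List.foldl_map]

/-- On a good tuple, `π[x₁* → y₁*]...[x_k* → y_k*](π⁻¹(y_k*)) = π(x_k*)`. -/
theorem reprogVec_apply_symm_last {k : ℕ} (π : Equiv.Perm X)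
    (x y : Fin (k + 1) → X) (h : IsGood π x y) :
    reprogVec π x y (π.symm (y (Fin.last k))) = π (x (Fin.last k)) := by
  obtain ⟨hx, hy, hxy⟩ := h
  set σ := reprogList π (List.ofFn fun i : Fin k => (x i.castSucc, y i.castSucc))
  have hlast_ne : ∀ i : Fin k, Fin.castSucc i ≠ Fin.last k := Fin.castSucc_ne_last
  have hσ : ∀ z, (∀ i : Fin k, z ≠ x i.castSucc ∧ π z ≠ y i.castSucc) → σ z = π z :=
    fun z hz => reprogList_apply_of_forall_ne
      (List.pairwise_ofFn.mpr fun i j hij =>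
        ⟨hxy _ _, hy.ne (Fin.castSucc_lt_castSucc_iff.mpr hij).ne⟩)
      (List.forall_mem_ofFn_iff.mpr hz)
  have hσy : σ.symm (y (Fin.last k)) = π.symm (y (Fin.last k)) := by
    refine (Equiv.symm_apply_eq _).mpr (Eq.symm ?_)
    rw [hσ _ fun i => ⟨?_, ?_⟩, apply_symm_apply]
    · exact fun h => hxy i.castSucc (Fin.last k) (by rw [← h, apply_symm_apply])
    · rw [apply_symm_apply]; exact hy.ne (hlast_ne i).symm
  rw [reprogVec_eq_reprogList, List.ofFn_succ', List.concat_eq_append, reprogList_append_singleton,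
    ← hσy, reprog_apply_symm]
  exact hσ _ fun i => ⟨hx.ne (hlast_ne i).symm, hxy _ _⟩
end
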